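/- Let D^X, D^Y be N×N real distance matrices with maximum entries m_X, m_Y, and set K̂^X = m_X·J − D^X, K̂^Y = m_Y·J − D^Y. Write T(A,B) = trace(H·A·H·H·B·H) with H = I − (1/N)J. If T(D^X,D^X)·T(D^Y,D^Y) > 0, then the normalized statistics (sample distance correlation and normalized sample HSIC) coincide: T(D^X,D^Y)/√(T(D^X,D^X)·T(D^Y,D^Y)) = T(K̂^X,K̂^Y)/√(T(K̂^X,K̂^X)·T(K̂^Y,K̂^Y)). -/

import Mathlib

/-! The rows of the centering matrix `H` sum to zero, so `H J = 0` and
`H (m J - D) H = - H D H`. The sign cancels in `T`, hence `T` takes the same values on the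
induced kernels as on the distance matrices, and the two normalized statistics agree term by
term. -/

open Matrix

lemma centering_mul_ones {n K : Type*} [Fintype n] [DecidableEq n] [Field K] [CharZero K] :
    ((1 : Matrix n n K) - (Fintype.card n : K)⁻¹ • of fun _ _ => 1) * (of fun _ _ => 1) = 0 := by
  ext i j
  rcases isEmpty_or_nonempty n with hn | hn
  · exact isEmptyElim i
  · have hcard : (Fintype.card n : K) ≠ 0 := Nat.cast_ne_zero.mpr Fintype.card_ne_zero
    simp [mul_apply, one_apply, hcard]

lemma mul_smul_sub_mul_of_mul_eq_zero {n R : Type*} [Fintype n] [CommRing R]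
    {H J : Matrix n n R} (hHJ : H * J = 0) (m : R) (D : Matrix n n R) :
    H * (m • J - D) * H = -(H * D * H) := by
  rw [Matrix.mul_sub, Matrix.mul_smul, hHJ, smul_zero, zero_sub, Matrix.neg_mul]

theorem stmt_12_general (N : ℕ) (DX DY : Matrix (Fin N) (Fin N) ℝ)
    (mX mY : ℝ) :
    let J : Matrix (Fin N) (Fin N) ℝ := Matrix.of fun _ _ => 1
    let H : Matrix (Fin N) (Fin N) ℝ := 1 - (N : ℝ)⁻¹ • J
    let KX : Matrix (Fin N) (Fin N) ℝ := mX • J - DX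
    let KY : Matrix (Fin N) (Fin N) ℝ := mY • J - DY
    let T : Matrix (Fin N) (Fin N) ℝ → Matrix (Fin N) (Fin N) ℝ → ℝ :=
      fun A B => (H * A * H * (H * B * H)).trace
    0 < T DX DX * T DY DY →
      T DX DY / Real.sqrt (T DX DX * T DY DY) =
        T KX KY / Real.sqrt (T KX KX * T KY KY) := by
  intro J H KX KY T _
  have hHJ : H * J = 0 := by
    simpa only [Fintype.card_fin] using centering_mul_ones (n := Fin N) (K := ℝ)
  have hT : ∀ (m m' : ℝ) (D D' : Matrix (Fin N) (Fin N) ℝ),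
      T (m • J - D) (m' • J - D') = T D D' := fun m m' D D' => by
    simp only [T, mul_smul_sub_mul_of_mul_eq_zero hHJ, Matrix.neg_mul, Matrix.mul_neg, neg_neg]
  rw [hT, hT, hT]

/-- With `T(A,B) = trace(H·A·H·H·B·H)`, distance matrices `DX, DY` with
maximum entries `mX, mY`, and bijective induced kernels `K̂X = mX·J - DX`,
`K̂Y = mY·J - DY`: if `T(DX,DX)·T(DY,DY) > 0` then the sample distance correlation
equals the normalized sample HSIC:
`T(DX,DY)/√(T(DX,DX)·T(DY,DY)) = T(K̂X,K̂Y)/√(T(K̂X,K̂X)·T(K̂Y,K̂Y))`. -/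
theorem stmt_12 (N : ℕ) (hN : 0 < N) (DX DY : Matrix (Fin N) (Fin N) ℝ)
    (mX mY : ℝ)
    (hmX : IsGreatest {r : ℝ | ∃ i j : Fin N, DX i j = r} mX)
    (hmY : IsGreatest {r : ℝ | ∃ i j : Fin N, DY i j = r} mY) :
    let J : Matrix (Fin N) (Fin N) ℝ := Matrix.of fun _ _ => 1
    let H : Matrix (Fin N) (Fin N) ℝ := 1 - (N : ℝ)⁻¹ • J
    let KX : Matrix (Fin N) (Fin N) ℝ := mX • J - DX
    let KY : Matrix (Fin N) (Fin N) ℝ := mY • J - DY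
    let T : Matrix (Fin N) (Fin N) ℝ → Matrix (Fin N) (Fin N) ℝ → ℝ :=
      fun A B => (H * A * H * (H * B * H)).trace
    0 < T DX DX * T DY DY →
      T DX DY / Real.sqrt (T DX DX * T DY DY) =
        T KX KY / Real.sqrt (T KX KX * T KY KY) :=
  stmt_12_general N DX DY mX mY
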